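/- Define K = (1/r)·log₂(1 + C⁻¹(log((m_d−m_c)/(m_d−m_t)))) − 1. If m_t > m_asy = m_d − (m_d−m_c)·exp(−C(T(r))), then K > 0, and for λ_c = 1.28·λ_u/K, the average MSE with load N̄(λ) = 1 + 1.28·λ_u/λ satisfies m̄(λ) ≤ m_t for all λ ≥ λ_c. -/

import Mathlib

noncomputable def C (x : ℝ) : ℝ := Real.sqrt x * Real.arctan (Real.sqrt x)
noncomputable def T (x : ℝ) : ℝ := (2 : ℝ) ^ x - 1

/-!
Writing `A = log ((m_d - m_c) / (m_d - m_t))`, the condition `m̄ ≤ m_t` is equivalent to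
`C (T (N̄ r)) ≤ A`; since `C` and `T` are monotone this is `N̄ r ≤ log₂ (1 + C⁻¹ A) = (1 + K) r`,
i.e. `1.28 λ_u / λ ≤ K`. The hypothesis `m_asy < m_t` is the same comparison at load `N̄ = 1`
with strict inequality, and gives `r < log₂ (1 + C⁻¹ A)`, i.e. `K > 0`.
-/

open Real

lemma le_mul_exp_neg_iff {u v a : ℝ} (hu : 0 < u) (hv : 0 < v) :
    u ≤ v * exp (-a) ↔ a ≤ log (v / u) := by
  rw [le_log_iff_exp_le (div_pos hv hu), le_div_iff₀ hu, exp_neg, ← div_eq_mul_inv,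
    le_div_iff₀ (exp_pos a), mul_comm]

lemma lt_mul_exp_neg_iff {u v a : ℝ} (hu : 0 < u) (hv : 0 < v) :
    u < v * exp (-a) ↔ a < log (v / u) := by
  rw [lt_log_iff_exp_lt (div_pos hv hu), lt_div_iff₀ hu, exp_neg, ← div_eq_mul_inv,
    lt_div_iff₀ (exp_pos a), mul_comm]

lemma C_nonneg (x : ℝ) : 0 ≤ C x :=
  mul_nonneg (sqrt_nonneg x) (arctan_nonneg.2 (sqrt_nonneg x))

lemma C_monotone : Monotone C := fun _ _ hxy =>
  mul_le_mul (sqrt_le_sqrt hxy) (arctan_strictMono.monotone (sqrt_le_sqrt hxy))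
    (arctan_nonneg.2 (sqrt_nonneg _)) (sqrt_nonneg _)

lemma neg_one_lt_T (x : ℝ) : -1 < T x := by
  rw [T, neg_lt_sub_iff_lt_add, lt_add_iff_pos_right]
  exact rpow_pos_of_pos two_pos x

lemma T_le_iff_le_logb {x y : ℝ} (hy : 0 < 1 + y) : T x ≤ y ↔ x ≤ logb 2 (1 + y) := by
  rw [le_logb_iff_rpow_le one_lt_two hy, T, sub_le_iff_le_add']

lemma T_lt_iff_lt_logb {x y : ℝ} (hy : 0 < 1 + y) : T x < y ↔ x < logb 2 (1 + y) := by
  rw [lt_logb_iff_rpow_lt one_lt_two hy, T, sub_lt_iff_lt_add']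

section Load

variable {r L a l : ℝ}

lemma critical_margin_pos (hr : 0 < r) (hrL : r < L) : 0 < 1 / r * L - 1 := by
  rw [sub_pos, one_div, inv_mul_eq_div, one_lt_div hr]
  exact hrL

lemma load_mul_le_of_critical_le (hr : 0 < r) (hrL : r < L) (ha : 0 < a)
    (hl : a / (1 / r * L - 1) ≤ l) : (1 + a / l) * r ≤ L := by
  have hK := critical_margin_pos hr hrL
  have hl_pos : 0 < l := (div_pos ha hK).trans_le hl
  have hal : a / l ≤ 1 / r * L - 1 := (div_le_comm₀ hK hl_pos).1 hl
  calc (1 + a / l) * r ≤ (1 + (1 / r * L - 1)) * r := by gcongr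
    _ = L := by field_simp; ring

end Load

theorem critical_density_general (mc mt md r lu : ℝ) (Cinv : ℝ → ℝ)
    (hCinv_right : ∀ y ≥ (0:ℝ), C (Cinv y) = y)
    (h2 : mt < md) (hr : 0 < r) (hu : 0 < lu)
    (hasy : md - (md - mc) * Real.exp (-(C (T r))) < mt) :
    (0 < (1 / r) * Real.logb 2 (1 + Cinv (Real.log ((md - mc) / (md - mt)))) - 1) ∧
    ∀ l : ℝ,
      1.28 * lu / ((1 / r) * Real.logb 2 (1 + Cinv (Real.log ((md - mc) / (md - mt)))) - 1) ≤ l →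
      md - (md - mc) * Real.exp (-(C (T ((1 + 1.28 * lu / l) * r)))) ≤ mt := by
  set A := log ((md - mc) / (md - mt))
  have hmt : 0 < md - mt := sub_pos.2 h2
  rw [sub_lt_comm] at hasy
  have hmc : 0 < md - mc := pos_of_mul_pos_left (hmt.trans hasy) (exp_pos _).le
  have hCTr : C (T r) < A := (lt_mul_exp_neg_iff hmt hmc).1 hasy
  have hCCinv : C (Cinv A) = A := hCinv_right A ((C_nonneg _).trans hCTr.le)
  have hTr : T r < Cinv A := C_monotone.reflect_lt (hCCinv.symm ▸ hCTr)
  have hCinv_pos : 0 < 1 + Cinv A := by linarith [neg_one_lt_T r]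
  have hrL : r < logb 2 (1 + Cinv A) := (T_lt_iff_lt_logb hCinv_pos).1 hTr
  refine ⟨critical_margin_pos hr hrL, fun l hl => ?_⟩
  rw [sub_le_comm, le_mul_exp_neg_iff hmt hmc]
  calc C (T ((1 + 1.28 * lu / l) * r))
      ≤ C (Cinv A) := C_monotone ((T_le_iff_le_logb hCinv_pos).2
        (load_mul_le_of_critical_le hr hrL (by positivity) hl))
    _ = A := hCCinv

theorem critical_density (mc mt md r lu : ℝ) (Cinv : ℝ → ℝ)
    (hCinv_left : ∀ x ≥ (0:ℝ), Cinv (C x) = x)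
    (hCinv_right : ∀ y ≥ (0:ℝ), C (Cinv y) = y)
    (hm0 : 0 ≤ mc) (h1 : mc < mt) (h2 : mt < md) (hr : 0 < r) (hu : 0 < lu)
    (hasy : md - (md - mc) * Real.exp (-(C (T r))) < mt) :
    (0 < (1 / r) * Real.logb 2 (1 + Cinv (Real.log ((md - mc) / (md - mt)))) - 1) ∧
    ∀ l : ℝ,
      1.28 * lu / ((1 / r) * Real.logb 2 (1 + Cinv (Real.log ((md - mc) / (md - mt)))) - 1) ≤ l →
      md - (md - mc) * Real.exp (-(C (T ((1 + 1.28 * lu / l) * r)))) ≤ mt :=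
  critical_density_general mc mt md r lu Cinv hCinv_right h2 hr hu hasy
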